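/- Let K be a field, n ≥ 3, and let S_n be the monoid presented by generators a_1, …, a_n and relations a_1 a_2 ⋯ a_n = a_{σ(1)} ⋯ a_{σ(n)} for σ in the cyclic group generated by the n-cycle. If Q is a prime ideal of the monoid S_n, then the K-linear span K[Q] is a prime two-sided ideal of the monoid algebra K[S_n]. -/

import Mathlib

/-!
Since `z = a_1 ⋯ a_n` is central, every element of `S_n` is `z ^ m * u` for a word `u` that
contains no cyclic rotation of `a_1 ⋯ a_n` as a factor. The map `a_i ↦ y_i y_{i+1}⁻¹` into the free
group on `y_1, …, y_n` kills `z` and sends such a `u` to the reduced word that records its maximal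
cyclically ascending runs, so together with the length it separates the elements of `S_n`.
Composing with the Magnus embedding `y ↦ 1 + y` into noncommutative integer power series, compared
lexicographically along the shortlex order of words, makes `S_n` a totally ordered monoid in which
multiplication is strictly monotone on both sides.

In `K[S_n]`, if `a, b ∉ K[Q]`, let `α` and `β` be the largest elements of their supports outside
`Q` and pick `s` with `α s β ∉ Q`. Any other product `x s y` with `x, y` in the supports is either
in `Q` or strictly smaller than `α s β`, so `α s β` occurs in `a s b` with coefficient
`a_α b_β ≠ 0`, and `a s b ∉ K[Q]`.
-/

/-- The word `a_{σ(1)} a_{σ(2)} ⋯ a_{σ(n)}` in the free monoid on `n` generators. -/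
def permWord (n : ℕ) (σ : Equiv.Perm (Fin n)) : FreeMonoid (Fin n) :=
  ((List.finRange n).map fun i => FreeMonoid.of (σ i)).prod

/-- The defining relations `a_1 a_2 ⋯ a_n = a_{σ(1)} a_{σ(2)} ⋯ a_{σ(n)}`, where `σ` runs
through the cyclic subgroup of `Sym_n` generated by the `n`-cycle `(1,2,…,n)` (i.e. `finRotate n`). -/
def cycRel (n : ℕ) : FreeMonoid (Fin n) → FreeMonoid (Fin n) → Prop :=
  fun x y => x = permWord n 1 ∧ ∃ k : ℕ, y = permWord n (finRotate n ^ k)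

/-- The monoid `S_n` presented by generators `a_1, …, a_n` and the above relations. -/
def Scyc (n : ℕ) : Type := (conGen (cycRel n)).Quotient

instance (n : ℕ) : Monoid (Scyc n) := Con.monoid _

/-- The generator `a_i` of `S_n`. -/
def agen {n : ℕ} (i : Fin n) : Scyc n := (conGen (cycRel n)).mk' (FreeMonoid.of i)

/-- The element `z = a_1 a_2 ⋯ a_n` of `S_n`. -/
def zc (n : ℕ) : Scyc n := ((List.finRange n).map agen).prod

namespace FreeMonoid

variable {α : Type*}

lemma prod_map_of (l : List α) : (l.map of).prod = ofList l := by
  induction l with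
  | nil => rfl
  | cons a l ih => rw [List.map_cons, List.prod_cons, ih, ofList_cons]

def lengthHom : FreeMonoid α →* Multiplicative ℕ where
  toFun w := Multiplicative.ofAdd w.length
  map_one' := rfl
  map_mul' x y := by rw [length_mul, ofAdd_add]

end FreeMonoid

@[ext]
structure NCPowerSeries (R β : Type*) where
  coeff : List β → R

namespace NCPowerSeries

open Finset

variable {R β : Type*}

section Semiring

variable [Semiring R]

instance : One (NCPowerSeries R β) := ⟨⟨fun w => if w = [] then 1 else 0⟩⟩

instance : Mul (NCPowerSeries R β) :=
  ⟨fun f g => ⟨fun w => ∑ i ∈ range (w.length + 1), f.coeff (w.take i) * g.coeff (w.drop i)⟩⟩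

lemma coeff_one (w : List β) : (1 : NCPowerSeries R β).coeff w = if w = [] then 1 else 0 := rfl

@[simp] lemma coeff_one_nil : (1 : NCPowerSeries R β).coeff [] = 1 := rfl

lemma coeff_one_of_ne_nil {w : List β} (h : w ≠ []) : (1 : NCPowerSeries R β).coeff w = 0 :=
  if_neg h

lemma coeff_mul (f g : NCPowerSeries R β) (w : List β) :
    (f * g).coeff w = ∑ i ∈ range (w.length + 1), f.coeff (w.take i) * g.coeff (w.drop i) := rfl

@[simp] lemma coeff_mul_nil (f g : NCPowerSeries R β) :
    (f * g).coeff [] = f.coeff [] * g.coeff [] := by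
  simp [coeff_mul]

lemma coeff_mul_singleton (f g : NCPowerSeries R β) (a : β) :
    (f * g).coeff [a] = f.coeff [] * g.coeff [a] + f.coeff [a] * g.coeff [] := by
  simp [coeff_mul, sum_range_succ]

protected lemma one_mul (f : NCPowerSeries R β) : 1 * f = f := by
  ext w
  rw [coeff_mul, sum_range_succ', sum_eq_zero fun i hi => ?_]
  · simp
  · rw [coeff_one_of_ne_nil (by simp at hi ⊢; exact List.ne_nil_of_length_pos (by omega)),
      zero_mul]

protected lemma mul_one (f : NCPowerSeries R β) : f * 1 = f := by
  ext w
  rw [coeff_mul, sum_range_succ, sum_eq_zero fun i hi => ?_]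
  · simp [coeff_one]
  · rw [coeff_one_of_ne_nil (by simp at hi ⊢; omega), mul_zero]

protected lemma mul_assoc (f g h : NCPowerSeries R β) : f * g * h = f * (g * h) := by
  ext w
  have lhs : (f * g * h).coeff w = ∑ j ∈ Ico 0 (w.length + 1), ∑ i ∈ Ico 0 (j + 1),
      f.coeff (w.take i) * g.coeff ((w.drop i).take (j - i)) * h.coeff (w.drop j) := by
    rw [coeff_mul, range_eq_Ico]
    refine sum_congr rfl fun j hj => ?_
    rw [coeff_mul, sum_mul, List.length_take, min_eq_left (by simp at hj; omega), range_eq_Ico]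
    refine sum_congr rfl fun i hi => ?_
    simp only [mem_Ico] at hi
    rw [List.take_take, min_eq_left (by omega), List.drop_take]
  have rhs : (f * (g * h)).coeff w = ∑ i ∈ Ico 0 (w.length + 1), ∑ j ∈ Ico i (w.length + 1),
      f.coeff (w.take i) * g.coeff ((w.drop i).take (j - i)) * h.coeff (w.drop j) := by
    rw [coeff_mul, range_eq_Ico]
    refine sum_congr rfl fun i hi => ?_
    rw [coeff_mul, mul_sum, sum_Ico_eq_sum_range, List.length_drop]
    refine sum_congr (by congr 1; simp at hi; omega) fun d _ => ?_
    rw [Nat.add_sub_cancel_left, List.drop_drop, mul_assoc]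
  rw [lhs, rhs, sum_Ico_Ico_comm]

instance : Monoid (NCPowerSeries R β) where
  mul_assoc := NCPowerSeries.mul_assoc
  one_mul := NCPowerSeries.one_mul
  mul_one := NCPowerSeries.mul_one

def constantCoeff : NCPowerSeries R β →* R where
  toFun f := f.coeff []
  map_one' := rfl
  map_mul' := coeff_mul_nil

def SupportedOnPowersOf (x : β) (f : NCPowerSeries R β) : Prop :=
  ∀ w, f.coeff w ≠ 0 → ∀ a ∈ w, a = x

lemma SupportedOnPowersOf.mul {x : β} {f g : NCPowerSeries R β} (hf : SupportedOnPowersOf x f)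
    (hg : SupportedOnPowersOf x g) : SupportedOnPowersOf x (f * g) := by
  intro w hw a ha
  obtain ⟨i, -, hi⟩ := exists_ne_zero_of_sum_ne_zero (by rwa [coeff_mul] at hw)
  rw [← List.take_append_drop i w, List.mem_append] at ha
  exact ha.elim (hf _ (left_ne_zero_of_mul hi) a) (hg _ (right_ne_zero_of_mul hi) a)

lemma SupportedOnPowersOf.coeff_take_eq_zero {x : β} {f : NCPowerSeries R β}
    (hf : SupportedOnPowersOf x f) {w : List β} (hw : w.IsChain (· ≠ ·)) {i : ℕ} (hi : 2 ≤ i)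
    (hl : 2 ≤ w.length) : f.coeff (w.take i) = 0 := by
  obtain ⟨a, b, t, rfl⟩ : ∃ a b t, w = a :: b :: t := by
    rcases w with _ | ⟨a, _ | ⟨b, t⟩⟩ <;> simp at hl ⊢
  obtain ⟨i, rfl⟩ := Nat.exists_eq_add_of_le' hi
  by_contra h
  have := hf _ h
  simp only [List.take_succ_cons, List.mem_cons, forall_eq_or_imp] at this
  exact List.rel_of_isChain_cons_cons hw (this.1.trans this.2.1.symm)

end Semiring

section Ring

variable [Ring R] [DecidableEq β]

def onePlusX (x : β) : NCPowerSeries R β := ⟨fun w => if w = [] ∨ w = [x] then 1 else 0⟩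

def invOnePlusX (x : β) : NCPowerSeries R β :=
  ⟨fun w => if ∀ a ∈ w, a = x then (-1) ^ w.length else 0⟩

lemma coeff_onePlusX (x : β) (w : List β) :
    (onePlusX x : NCPowerSeries R β).coeff w = if w = [] ∨ w = [x] then 1 else 0 := rfl

lemma coeff_onePlusX_of_two_le {x : β} {w : List β} (hw : 2 ≤ w.length) :
    (onePlusX x : NCPowerSeries R β).coeff w = 0 := by
  rw [coeff_onePlusX, if_neg]
  rintro (rfl | rfl) <;> simp at hw

lemma coeff_invOnePlusX_cons (x a : β) (w : List β) :
    (invOnePlusX x : NCPowerSeries R β).coeff (a :: w) =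
      if a = x then -(invOnePlusX x).coeff w else 0 := by
  simp only [invOnePlusX, List.forall_mem_cons, List.length_cons, pow_succ]
  by_cases ha : a = x
  · simp only [ha, true_and, if_true]
    split_ifs <;> simp
  · simp [ha]

lemma coeff_invOnePlusX_concat (x a : β) (w : List β) :
    (invOnePlusX x : NCPowerSeries R β).coeff (w ++ [a]) =
      if a = x then -(invOnePlusX x).coeff w else 0 := by
  simp only [invOnePlusX, List.forall_mem_append, List.forall_mem_singleton, List.length_append,
    List.length_singleton, pow_succ]
  by_cases ha : a = x
  · simp only [ha, and_true, if_true]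
    split_ifs <;> simp
  · simp [ha]

lemma onePlusX_mul_invOnePlusX (x : β) : (onePlusX x * invOnePlusX x : NCPowerSeries R β) = 1 := by
  ext (_ | ⟨a, w⟩)
  · simp [onePlusX, invOnePlusX]
  rw [coeff_mul, List.length_cons, sum_range_succ', sum_range_succ', sum_eq_zero fun i hi => by
      rw [coeff_onePlusX_of_two_le (by simp at hi ⊢; omega), zero_mul],
    coeff_one_of_ne_nil (List.cons_ne_nil a w)]
  by_cases ha : a = x <;> simp [onePlusX, coeff_invOnePlusX_cons, ha]

lemma invOnePlusX_mul_onePlusX (x : β) : (invOnePlusX x * onePlusX x : NCPowerSeries R β) = 1 := by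
  ext w
  rcases List.eq_nil_or_concat w with rfl | ⟨w, a, rfl⟩
  · simp [onePlusX, invOnePlusX]
  rw [List.concat_eq_append, coeff_mul, List.length_append, List.length_singleton, sum_range_succ,
    sum_range_succ, sum_eq_zero fun i hi => by
      rw [coeff_onePlusX_of_two_le (by simp at hi ⊢; omega), mul_zero],
    coeff_one_of_ne_nil (by simp)]
  by_cases ha : a = x <;> simp [onePlusX, coeff_invOnePlusX_concat, ha, List.take_of_length_le]

def onePlusXUnit (x : β) : (NCPowerSeries R β)ˣ :=
  ⟨onePlusX x, invOnePlusX x, onePlusX_mul_invOnePlusX x, invOnePlusX_mul_onePlusX x⟩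

@[simp] lemma val_onePlusXUnit (x : β) :
    ((onePlusXUnit x : (NCPowerSeries R β)ˣ) : NCPowerSeries R β) = onePlusX x := rfl

@[simp] lemma val_inv_onePlusXUnit (x : β) :
    (((onePlusXUnit x)⁻¹ : (NCPowerSeries R β)ˣ) : NCPowerSeries R β) = invOnePlusX x := rfl

lemma supportedOnPowersOf_onePlusXUnit_zpow (x : β) (z : ℤ) :
    SupportedOnPowersOf x ((onePlusXUnit x ^ z : (NCPowerSeries R β)ˣ) : NCPowerSeries R β) := by
  have hpos : SupportedOnPowersOf x (onePlusX x : NCPowerSeries R β) := by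
    intro w hw
    by_contra h
    apply hw
    rw [coeff_onePlusX, if_neg]
    rintro (rfl | rfl) <;> simp at h
  have hneg : SupportedOnPowersOf x (invOnePlusX x : NCPowerSeries R β) :=
    fun w hw => by_contra fun h => hw (if_neg h)
  induction z using Int.induction_on with
  | zero =>
    intro w hw
    rw [zpow_zero, Units.val_one, coeff_one] at hw
    simp [show w = [] by by_contra h; simp [h] at hw]
  | succ z ih => rw [zpow_add_one, Units.val_mul]; exact ih.mul hpos
  | pred z ih => rw [zpow_sub_one, Units.val_mul]; exact ih.mul hneg

lemma coeff_nil_onePlusXUnit_zpow (x : β) (z : ℤ) :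
    ((onePlusXUnit x ^ z : (NCPowerSeries R β)ˣ) : NCPowerSeries R β).coeff [] = 1 := by
  have h : Units.map constantCoeff (onePlusXUnit x : (NCPowerSeries R β)ˣ) = 1 :=
    Units.ext (by simp [constantCoeff, onePlusX])
  simpa [← map_zpow, constantCoeff] using congrArg Units.val (congrArg (· ^ z) h)

lemma coeff_singleton_onePlusXUnit_zpow (x : β) (z : ℤ) :
    ((onePlusXUnit x ^ z : (NCPowerSeries R β)ˣ) : NCPowerSeries R β).coeff [x] = z := by
  induction z using Int.induction_on with
  | zero => simp [coeff_one]
  | succ z ih =>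
    rw [zpow_add_one, Units.val_mul, coeff_mul_singleton, coeff_nil_onePlusXUnit_zpow, ih]
    simp [coeff_onePlusX]
    abel
  | pred z ih =>
    rw [zpow_sub_one, Units.val_mul, coeff_mul_singleton, coeff_nil_onePlusXUnit_zpow, ih]
    simp [invOnePlusX]
    abel

def blockProd (B : List (β × ℤ)) : (NCPowerSeries R β)ˣ :=
  (B.map fun p => onePlusXUnit p.1 ^ p.2).prod

lemma blockProd_cons (p : β × ℤ) (B : List (β × ℤ)) :
    (blockProd (p :: B) : (NCPowerSeries R β)ˣ) = onePlusXUnit p.1 ^ p.2 * blockProd B :=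
  List.prod_cons

lemma coeff_blockProd_eq_zero (B : List (β × ℤ)) {w : List β} (hw : w.IsChain (· ≠ ·))
    (h : B.length < w.length) :
    ((blockProd B : (NCPowerSeries R β)ˣ) : NCPowerSeries R β).coeff w = 0 := by
  induction B generalizing w with
  | nil => exact coeff_one_of_ne_nil (List.ne_nil_of_length_pos h)
  | cons p B ih =>
    obtain ⟨a, w, rfl⟩ := List.exists_cons_of_length_pos (by omega : 0 < w.length)
    simp only [List.length_cons] at h
    have hP := supportedOnPowersOf_onePlusXUnit_zpow (R := R) p.1 p.2
    rw [blockProd_cons, Units.val_mul, coeff_mul, List.length_cons, sum_range_succ',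
      sum_range_succ', sum_eq_zero fun i _ => by
        rw [hP.coeff_take_eq_zero hw (by omega) (by simp; omega), zero_mul]]
    simp only [zero_add, List.drop_zero, List.drop_succ_cons]
    rw [ih hw (by simp; omega), ih (w := w) hw.tail (by omega)]
    simp

lemma coeff_blockProd_map_fst (B : List (β × ℤ)) (hB : B.IsChain (fun p q => p.1 ≠ q.1)) :
    ((blockProd B : (NCPowerSeries R β)ˣ) : NCPowerSeries R β).coeff (B.map Prod.fst) =
      ((B.map Prod.snd).prod : ℤ) := by
  induction B with
  | nil => simp [blockProd]
  | cons p B ih =>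
    have hW : ((p :: B).map Prod.fst).IsChain (· ≠ ·) :=
      List.isChain_map_of_isChain Prod.fst (fun _ _ h => h) hB
    have hP := supportedOnPowersOf_onePlusXUnit_zpow (R := R) p.1 p.2
    rw [List.map_cons] at hW ⊢
    rw [blockProd_cons, Units.val_mul, coeff_mul, List.length_cons, sum_range_succ',
      sum_range_succ', sum_eq_zero fun i hi => by
        rw [hP.coeff_take_eq_zero hW (by omega) (by simp at hi ⊢; omega), zero_mul]]
    simp only [zero_add, List.drop_zero, List.take_zero, List.drop_succ_cons, List.take_succ_cons]
    rw [coeff_blockProd_eq_zero B hW (by simp), ih hB.tail, coeff_singleton_onePlusXUnit_zpow]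
    simp

end Ring

end NCPowerSeries

namespace FreeGroup

variable {β : Type*} [DecidableEq β]

def blockExp : Bool → ℕ → ℤ
  | true, k => k + 1
  | false, k => -(k + 1)

lemma blockExp_ne_zero (b : Bool) (k : ℕ) : blockExp b k ≠ 0 := by
  cases b <;> simp [blockExp] <;> omega

def pushLetter (a : β × Bool) : List (β × Bool × ℕ) → List (β × Bool × ℕ)
  | [] => [(a.1, a.2, 0)]
  | (y, b, k) :: r => if a = (y, b) then (y, b, k + 1) :: r else (a.1, a.2, 0) :: (y, b, k) :: r

/-- Groups a word into maximal blocks of equal letters; the block `(x, b, k)` stands for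
`x ^ blockExp b k = x ^ (± (k + 1))`. -/
def letterBlocks (w : List (β × Bool)) : List (β × Bool × ℕ) := w.foldr pushLetter []

def expBlocks (w : List (β × Bool)) : List (β × ℤ) :=
  (letterBlocks w).map fun q => (q.1, blockExp q.2.1 q.2.2)

lemma letterBlocks_cons (a : β × Bool) (w : List (β × Bool)) :
    ∃ k r, letterBlocks (a :: w) = (a.1, a.2, k) :: r := by
  show ∃ k r, pushLetter a (letterBlocks w) = _
  rcases letterBlocks w with _ | ⟨⟨y, b, k⟩, r⟩
  · exact ⟨0, [], rfl⟩
  · by_cases h : a = (y, b)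
    · subst h
      exact ⟨k + 1, r, if_pos rfl⟩
    · exact ⟨0, _, if_neg h⟩

lemma mk_eq_prod_expBlocks (w : List (β × Bool)) :
    mk w = ((expBlocks w).map fun p => of p.1 ^ p.2).prod := by
  rw [expBlocks, List.map_map]
  induction w with
  | nil => rfl
  | cons a w ih =>
    have ha : mk [a] = of a.1 ^ blockExp a.2 0 := by
      obtain ⟨x, _ | _⟩ := a <;> simp [blockExp] <;> rfl
    rw [← List.singleton_append, ← mul_mk, ih, ha]
    show _ = ((pushLetter a (letterBlocks w)).map _).prod
    rcases letterBlocks w with _ | ⟨⟨y, b, k⟩, r⟩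
    · simp [pushLetter]
    · by_cases h : a = (y, b)
      · subst h
        simp only [pushLetter, if_pos, List.map_cons, List.prod_cons, Function.comp_apply,
          ← mul_assoc, ← zpow_add]
        congr 2
        cases b <;> simp only [blockExp] <;> push_cast <;> ring
      · simp [pushLetter, if_neg h]

lemma IsReduced.isChain_letterBlocks {w : List (β × Bool)} (hw : IsReduced w) :
    (letterBlocks w).IsChain (fun p q => p.1 ≠ q.1) := by
  induction w with
  | nil => exact List.isChain_nil
  | cons a w ih =>
    rcases w with _ | ⟨a', w⟩
    · exact List.isChain_singleton _
    obtain ⟨k, r, hr⟩ := letterBlocks_cons a' w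
    have ih := ih hw.tail
    show (pushLetter a (letterBlocks (a' :: w))).IsChain _
    rw [hr] at ih ⊢
    by_cases h : a = (a'.1, a'.2)
    · rw [pushLetter, if_pos h]
      exact List.isChain_cons.mpr ⟨fun q hq => List.isChain_cons.mp ih |>.1 q hq, ih.tail⟩
    · rw [pushLetter, if_neg h]
      exact List.isChain_cons_cons.mpr
        ⟨fun he => h (Prod.ext he ((isReduced_cons_cons.mp hw).1 he)), ih⟩

lemma IsReduced.isChain_expBlocks {w : List (β × Bool)} (hw : IsReduced w) :
    (expBlocks w).IsChain (fun p q => p.1 ≠ q.1) :=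
  List.isChain_map_of_isChain (fun q : β × Bool × ℕ => (q.1, blockExp q.2.1 q.2.2))
    (fun _ _ h => h) hw.isChain_letterBlocks

lemma expBlocks_ne_nil {w : List (β × Bool)} (hw : w ≠ []) : expBlocks w ≠ [] := by
  obtain ⟨a, w, rfl⟩ := List.exists_cons_of_ne_nil hw
  obtain ⟨k, r, hkr⟩ := letterBlocks_cons a w
  simp [expBlocks, hkr]

lemma ne_zero_of_mem_expBlocks {w : List (β × Bool)} {p : β × ℤ} (hp : p ∈ expBlocks w) :
    p.2 ≠ 0 := by
  obtain ⟨q, -, rfl⟩ := List.mem_map.mp hp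
  exact blockExp_ne_zero _ _

end FreeGroup

namespace NCPowerSeries

open FreeGroup

variable {R β : Type*} [Ring R] [DecidableEq β]

def magnus : FreeGroup β →* (NCPowerSeries R β)ˣ := FreeGroup.lift onePlusXUnit

lemma magnus_mk (w : List (β × Bool)) :
    magnus (FreeGroup.mk w) = (blockProd (expBlocks w) : (NCPowerSeries R β)ˣ) := by
  rw [mk_eq_prod_expBlocks, map_list_prod, blockProd, List.map_map]
  congr 1
  refine List.map_congr_left fun q _ => ?_
  simp [magnus]

lemma coeff_nil_magnus (g : FreeGroup β) :
    ((magnus g : (NCPowerSeries R β)ˣ) : NCPowerSeries R β).coeff [] = 1 := by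
  have h : (Units.map constantCoeff).comp (magnus (R := R) (β := β)) = 1 :=
    FreeGroup.ext_hom _ _ fun x => Units.ext (by simp [magnus, constantCoeff, coeff_onePlusX])
  simpa [constantCoeff] using congrArg Units.val (DFunLike.congr_fun h g)

/-- The Magnus embedding: a reduced word with blocks `x₁ ^ e₁ ⋯ x_k ^ e_k` has image whose
coefficient at `x₁ ⋯ x_k` is `e₁ ⋯ e_k ≠ 0`, while `1` has no such coefficient. -/
theorem magnus_injective [CharZero R] : Function.Injective (magnus (R := R) (β := β)) := by
  refine (injective_iff_map_eq_one _).mpr fun g hg => ?_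
  have key := coeff_blockProd_map_fst (R := R) _ (isReduced_toWord (x := g)).isChain_expBlocks
  rw [← magnus_mk, mk_toWord, hg, Units.val_one] at key
  by_contra hne
  have hB := expBlocks_ne_nil (mt toWord_eq_nil_iff.mp hne)
  rw [coeff_one_of_ne_nil (by simpa using hB), eq_comm, Int.cast_eq_zero,
    List.prod_eq_zero_iff, List.mem_map] at key
  obtain ⟨p, hp, h0⟩ := key
  exact ne_zero_of_mem_expBlocks hp h0

end NCPowerSeries

def Shortlex (β : Type*) := List β

namespace Shortlex

variable {β : Type*}

def toShortlex : List β ≃ Shortlex β := Equiv.refl _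

variable [LinearOrder β]

instance : LinearOrder (Shortlex β) :=
  LinearOrder.lift' (fun w => toLex ((toShortlex.symm w).length, toShortlex.symm w))
    fun _ _ h => congrArg Prod.snd (toLex.injective h)

lemma toShortlex_lt_toShortlex {v w : List β} :
    toShortlex v < toShortlex w ↔ List.Shortlex (· < ·) v w := by
  change toLex (v.length, v) < toLex (w.length, w) ↔ _
  rw [Prod.Lex.toLex_lt_toLex, List.shortlex_def]
  rfl

lemma toShortlex_lt_of_length_lt {v w : List β} (h : v.length < w.length) :
    toShortlex v < toShortlex w :=
  toShortlex_lt_toShortlex.mpr (List.Shortlex.of_length_lt h)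

lemma toShortlex_drop_le (i : ℕ) (w : List β) : toShortlex (w.drop i) ≤ toShortlex w := by
  rcases (List.drop_suffix i w).length_le.lt_or_eq with h | h
  · exact (toShortlex_lt_of_length_lt h).le
  · rw [(List.drop_suffix i w).eq_of_length h]

lemma toShortlex_take_le (i : ℕ) (w : List β) : toShortlex (w.take i) ≤ toShortlex w := by
  rcases (List.take_prefix i w).length_le.lt_or_eq with h | h
  · exact (toShortlex_lt_of_length_lt h).le
  · rw [(List.take_prefix i w).eq_of_length h]

instance [WellFoundedLT β] : WellFoundedLT (Shortlex β) :=
  ⟨(List.Shortlex.wf wellFounded_lt).mono fun _ _ h => toShortlex_lt_toShortlex.mp h⟩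

end Shortlex

namespace NCPowerSeries

open Shortlex Finset

variable {R β : Type*} [LinearOrder β] [WellFoundedLT β]

section LinearOrder

variable [LinearOrder R]

def toLexCoeff (f : NCPowerSeries R β) : Lex (Shortlex β → R) :=
  toLex (f.coeff ∘ toShortlex.symm)

noncomputable instance : LinearOrder (NCPowerSeries R β) :=
  LinearOrder.lift' toLexCoeff fun _ _ h =>
    NCPowerSeries.ext (funext fun w => congrFun (toLex.injective h) (toShortlex w))

lemma lt_iff_exists {f g : NCPowerSeries R β} : f < g ↔ ∃ μ : List β,
    (∀ ν, toShortlex ν < toShortlex μ → f.coeff ν = g.coeff ν) ∧ f.coeff μ < g.coeff μ :=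
  Iff.rfl

end LinearOrder

variable [Semiring R] [LinearOrder R] [AddLeftStrictMono R]

/- At the first word `μ` where `f` and `g` differ, only the term `h.coeff [] * f.coeff μ` of
`(h * f).coeff μ` involves a coefficient of `f` at a word not shorter than `μ`. -/
lemma mul_lt_mul_left_of_coeff_nil {h : NCPowerSeries R β} (hh : h.coeff [] = 1)
    {f g : NCPowerSeries R β} (hfg : f < g) : h * f < h * g := by
  obtain ⟨μ, heq, hlt⟩ := lt_iff_exists.mp hfg
  refine lt_iff_exists.mpr ⟨μ, fun ν hν => ?_, ?_⟩
  · rw [coeff_mul, coeff_mul]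
    exact sum_congr rfl fun i _ => by rw [heq _ ((toShortlex_drop_le i ν).trans_lt hν)]
  · rw [coeff_mul, coeff_mul, sum_range_succ', sum_range_succ']
    rw [sum_congr rfl fun i hi => by
      rw [heq _ (toShortlex_lt_of_length_lt (by simp at hi ⊢; omega))]]
    simpa [hh] using add_lt_add_right hlt _

lemma mul_lt_mul_right_of_coeff_nil {h : NCPowerSeries R β} (hh : h.coeff [] = 1)
    {f g : NCPowerSeries R β} (hfg : f < g) : f * h < g * h := by
  obtain ⟨μ, heq, hlt⟩ := lt_iff_exists.mp hfg
  refine lt_iff_exists.mpr ⟨μ, fun ν hν => ?_, ?_⟩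
  · rw [coeff_mul, coeff_mul]
    exact sum_congr rfl fun i _ => by rw [heq _ ((toShortlex_take_le i ν).trans_lt hν)]
  · rw [coeff_mul, coeff_mul, sum_range_succ, sum_range_succ]
    rw [sum_congr rfl fun i hi => by
      rw [heq _ (toShortlex_lt_of_length_lt (by simp at hi ⊢; omega))]]
    simpa [hh] using add_lt_add_right hlt _

end NCPowerSeries

lemma Finset.exists_max_of_not_subset {M : Type*} [LinearOrder M] {Q : Set M} (s : Finset M)
    (h : ¬ (↑s : Set M) ⊆ Q) : ∃ α ∈ s, α ∉ Q ∧ ∀ x ∈ s, x ∉ Q → x ≤ α := by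
  classical
  have hne : (s.filter (· ∉ Q)).Nonempty := by
    obtain ⟨x, hx, hxQ⟩ := Set.not_subset.mp h
    exact ⟨x, Finset.mem_filter.mpr ⟨hx, hxQ⟩⟩
  obtain ⟨hα, hαQ⟩ := Finset.mem_filter.mp ((s.filter (· ∉ Q)).max'_mem hne)
  exact ⟨_, hα, hαQ, fun x hx hxQ => Finset.le_max' _ x (Finset.mem_filter.mpr ⟨hx, hxQ⟩)⟩

namespace MonoidAlgebra

variable {k M : Type*} [Semiring k] [Monoid M] {Q : Set M}

lemma span_of_image_eq_supported (Q : Set M) :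
    Submodule.span k (of k M '' Q) = supported k k Q := by
  rw [supported_eq_span_single]
  rfl

lemma mul_mem_supported_left (hQ : ∀ q ∈ Q, ∀ s : M, s * q ∈ Q) {x : k[M]}
    (hx : x ∈ supported k k Q) (r : k[M]) : r * x ∈ supported k k Q := by
  classical
  intro t ht
  obtain ⟨u, -, v, hv, rfl⟩ := Finset.mem_mul.mp (support_coeff_mul_subset r x ht)
  exact hQ v (hx hv) u

lemma mul_mem_supported_right (hQ : ∀ q ∈ Q, ∀ s : M, q * s ∈ Q) {x : k[M]}
    (hx : x ∈ supported k k Q) (r : k[M]) : x * r ∈ supported k k Q := by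
  classical
  intro t ht
  obtain ⟨u, hu, v, -, rfl⟩ := Finset.mem_mul.mp (support_coeff_mul_subset x r ht)
  exact hQ u (hx hu) v

lemma supported_ne_top [Nontrivial k] (hQ : Q ≠ Set.univ) : supported k k Q ≠ ⊤ := by
  obtain ⟨m, hm⟩ := (Set.ne_univ_iff_exists_notMem Q).mp hQ
  intro h
  have : of k M m ∈ supported k k Q := h ▸ Submodule.mem_top
  rw [← span_of_image_eq_supported, of_mem_span_of_iff] at this
  exact hm this

lemma mem_supported_or_mem_supported [NoZeroDivisors k] [LinearOrder M] [MulLeftStrictMono M]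
    [MulRightStrictMono M] (hQl : ∀ q ∈ Q, ∀ s : M, s * q ∈ Q) (hQr : ∀ q ∈ Q, ∀ s : M, q * s ∈ Q)
    (hprime : ∀ a b : M, a ∉ Q → b ∉ Q → ∃ s : M, a * s * b ∉ Q) {a b : k[M]}
    (hab : ∀ r : k[M], a * r * b ∈ supported k k Q) :
    a ∈ supported k k Q ∨ b ∈ supported k k Q := by
  classical
  have := mulLeftMono_of_mulLeftStrictMono M
  have := MulLeftStrictMono.toIsLeftCancelMul (α := M)
  by_contra! ⟨ha, hb⟩
  obtain ⟨α, hα, hαQ, hαmax⟩ := a.coeff.support.exists_max_of_not_subset ha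
  obtain ⟨β, hβ, hβQ, hβmax⟩ := b.coeff.support.exists_max_of_not_subset hb
  obtain ⟨s, hs⟩ := hprime α β hαQ hβQ
  set b' := single s (1 : k) * b
  have hb' : b'.coeff (s * β) = b.coeff β := by
    rw [coeff_single_mul_eq_mul_coeff β (fun y _ => mul_right_inj s), one_mul]
  have huniq : UniqueMul a.coeff.support b'.coeff.support α (s * β) := by
    intro x y' hx hy' hxy
    obtain ⟨y, hy, rfl⟩ := Finset.mem_image.mp (support_coeff_single_mul_subset b 1 s hy')
    have hxQ : x ∉ Q := fun hq => hs (by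
      rw [mul_assoc, ← hxy, ← mul_assoc]; exact hQr _ (hQr x hq s) y)
    have hyQ : y ∉ Q := fun hq => hs (by
      rw [mul_assoc, ← hxy, ← mul_assoc]; exact hQl y hq _)
    rcases (hαmax x hx hxQ).lt_or_eq with hlt | rfl
    · exact absurd hxy (mul_lt_mul_of_lt_of_le hlt (mul_le_mul_right (hβmax y hy hyQ) s)).ne
    rcases (hβmax y hy hyQ).lt_or_eq with hlt | rfl
    · exact absurd hxy (mul_lt_mul_right (mul_lt_mul_right hlt s) x).ne
    exact ⟨rfl, rfl⟩
  have hcoeff := coeff_mul_mul_of_uniqueMul huniq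
  rw [hb', ← mul_assoc, ← mul_assoc] at hcoeff
  apply hs
  apply hab (single s 1)
  rw [Finset.mem_coe, Finsupp.mem_support_iff]
  change (a * single s 1 * b).coeff (α * s * β) ≠ 0
  rw [hcoeff]
  exact mul_ne_zero (Finsupp.mem_support_iff.mp hα) (Finsupp.mem_support_iff.mp hβ)

end MonoidAlgebra

namespace Scyc

open Fin.NatCast Fin.CommRing FreeMonoid NCPowerSeries

variable {n : ℕ}

def mk : FreeMonoid (Fin n) →* Scyc n := (conGen (cycRel n)).mk'

lemma mk_surjective : Function.Surjective (mk : FreeMonoid (Fin n) → Scyc n) :=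
  Con.mk'_surjective

lemma permWord_eq_ofList (σ : Equiv.Perm (Fin n)) :
    permWord n σ = ofList ((List.finRange n).map σ) := by
  rw [permWord, ← prod_map_of, List.map_map]
  rfl

def lengthHom : Scyc n →* Multiplicative ℕ :=
  Con.lift _ FreeMonoid.lengthHom <| Con.conGen_le.mpr fun x y h => by
    obtain ⟨rfl, k, rfl⟩ := h
    simp [Con.ker_rel, FreeMonoid.lengthHom, permWord_eq_ofList, FreeMonoid.length]

lemma lengthHom_mk (w : FreeMonoid (Fin n)) : lengthHom (mk w) = FreeMonoid.lengthHom w :=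
  Con.lift_mk' _ _

variable [NeZero n]

def ascRun (c : Fin n) : ℕ → List (Fin n)
  | 0 => []
  | ℓ + 1 => c :: ascRun (c + 1) ℓ

def rotWord (c : Fin n) : List (Fin n) := ascRun c n

@[simp] lemma length_ascRun (c : Fin n) (ℓ : ℕ) : (ascRun c ℓ).length = ℓ := by
  induction ℓ generalizing c <;> simp [ascRun, *]

lemma ascRun_add (c : Fin n) (k ℓ : ℕ) :
    ascRun c (k + ℓ) = ascRun c k ++ ascRun (c + (k : Fin n)) ℓ := by
  induction k generalizing c with
  | zero => simp [ascRun]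
  | succ k ih =>
    rw [Nat.add_right_comm, ascRun, ih, ascRun, List.cons_append]
    push_cast
    ring_nf

lemma cons_rotWord_add_one (c : Fin n) : c :: rotWord (c + 1) = rotWord c ++ [c] := by
  change ascRun c (n + 1) = ascRun c n ++ [c]
  rw [ascRun_add, Fin.natCast_self, add_zero]
  rfl

lemma getElem_ascRun (c : Fin n) (ℓ i : ℕ) (h : i < (ascRun c ℓ).length) :
    (ascRun c ℓ)[i] = c + (i : Fin n) := by
  induction ℓ generalizing c i with
  | zero => simp at h
  | succ ℓ ih =>
    rcases i with _ | i
    · simp [ascRun]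
    · simp only [ascRun, List.getElem_cons_succ, ih]
      push_cast
      ring

lemma finRotate_pow_apply (k : ℕ) (i : Fin n) : (finRotate n ^ k) i = i + (k : Fin n) := by
  induction k with
  | zero => simp
  | succ k ih =>
    rw [pow_succ', Equiv.Perm.mul_apply, ih, finRotate_apply]
    push_cast
    ring

lemma permWord_finRotate_pow (k : ℕ) : permWord n (finRotate n ^ k) = ofList (rotWord k) := by
  rw [permWord_eq_ofList]
  congr 1
  refine List.ext_getElem (by simp [rotWord]) fun i h _ => ?_
  simp only [rotWord, getElem_ascRun]
  simp [finRotate_pow_apply, add_comm, Fin.ext_iff, Nat.mod_eq_of_lt (by simpa using h)]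

lemma zc_eq_mk_rotWord (c : Fin n) : zc n = mk (ofList (rotWord c)) := by
  have hrel : mk (permWord n 1) = mk (permWord n (finRotate n ^ c.val)) :=
    (Con.eq _).mpr (ConGen.Rel.of _ _ ⟨rfl, c.val, rfl⟩)
  rw [permWord_finRotate_pow, Fin.cast_val_eq_self] at hrel
  rw [← hrel, zc, permWord, map_list_prod, List.map_map]
  rfl

lemma commute_zc_mk_of (i : Fin n) : Commute (zc n) (mk (of i)) :=
  calc zc n * mk (of i) = mk (ofList (rotWord i ++ [i])) := by
        rw [zc_eq_mk_rotWord i, ofList_append, map_mul, ofList_singleton]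
    _ = mk (of i) * zc n := by
        rw [← cons_rotWord_add_one, zc_eq_mk_rotWord (i + 1), ofList_cons, map_mul]

lemma commute_zc (x : Scyc n) : Commute (zc n) x := by
  obtain ⟨w, rfl⟩ := mk_surjective x
  induction w using FreeMonoid.inductionOn' with
  | one => exact (map_one mk).symm ▸ Commute.one_right _
  | of_mul i w ih => rw [map_mul]; exact (commute_zc_mk_of i).mul_right ih

def RotWordFree (u : List (Fin n)) : Prop := ∀ c, ¬ rotWord c <:+: u

lemma exists_eq_zc_pow_mul (x : Scyc n) :
    ∃ m u, RotWordFree u ∧ x = zc n ^ m * mk (ofList u) := by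
  obtain ⟨w, rfl⟩ := mk_surjective x
  induction h : w.length using Nat.strong_induction_on generalizing w with
  | _ L ih =>
    by_cases hw : RotWordFree w.toList
    · exact ⟨0, w.toList, hw, by simp⟩
    obtain ⟨c, p, q, hpq⟩ := not_forall_not.mp hw
    have hlt : (p ++ q).length < L := by
      have hlen := congrArg List.length hpq
      simp only [List.length_append, rotWord, length_ascRun] at hlen
      have := NeZero.pos n
      rw [← h, FreeMonoid.length, ← hlen, List.length_append]
      omega
    obtain ⟨m, u, hu, he⟩ := ih _ hlt (ofList (p ++ q)) rfl
    refine ⟨m + 1, u, hu, ?_⟩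
    calc mk w = mk (ofList p) * zc n * mk (ofList q) := by
          rw [← ofList_toList w, ← hpq, ofList_append, ofList_append, map_mul, map_mul,
            ← zc_eq_mk_rotWord]
      _ = zc n * mk (ofList (p ++ q)) := by
          rw [← (commute_zc _).eq, mul_assoc, ofList_append, map_mul]
      _ = zc n ^ (m + 1) * mk (ofList u) := by rw [he, pow_succ', mul_assoc]

def consRun (a : Fin n) : List (Fin n × ℕ) → List (Fin n × ℕ)
  | [] => [(a, 1)]
  | p :: r => if p.1 = a + 1 then (a, p.2 + 1) :: r else (a, 1) :: p :: r

/-- The maximal runs `a_c a_{c+1} ⋯ a_{c+ℓ-1}` (indices mod `n`) of a word, as pairs `(c, ℓ)`. -/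
def runs (u : List (Fin n)) : List (Fin n × ℕ) := u.foldr consRun []

def joinRuns (rs : List (Fin n × ℕ)) : List (Fin n) := (rs.map fun p => ascRun p.1 p.2).flatten

lemma joinRuns_consRun (a : Fin n) (rs : List (Fin n × ℕ)) :
    joinRuns (consRun a rs) = a :: joinRuns rs := by
  rcases rs with _ | ⟨p, r⟩
  · rfl
  · rw [consRun.eq_2]
    split_ifs with h
    · simp [joinRuns, ascRun, h]
    · simp [joinRuns, ascRun]

lemma joinRuns_runs (u : List (Fin n)) : joinRuns (runs u) = u := by
  induction u with
  | nil => rfl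
  | cons a u ih => exact (joinRuns_consRun a _).trans (congrArg _ ih)

lemma runs_cons (a : Fin n) (u : List (Fin n)) :
    ∃ ℓ r, runs (a :: u) = (a, ℓ + 1) :: r ∧ ∀ q ∈ r, q ∈ runs u := by
  show ∃ ℓ r, consRun a (runs u) = _ ∧ _
  rcases runs u with _ | ⟨p, r⟩
  · exact ⟨0, [], rfl, by simp⟩
  · rw [consRun.eq_2]
    split_ifs
    · exact ⟨p.2, r, rfl, fun q hq => List.mem_cons_of_mem _ hq⟩
    · exact ⟨0, p :: r, rfl, fun q hq => hq⟩

lemma pos_of_mem_runs {u : List (Fin n)} {p : Fin n × ℕ} (hp : p ∈ runs u) : 0 < p.2 := by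
  induction u with
  | nil => simp [runs] at hp
  | cons a u ih =>
    obtain ⟨ℓ, r, hr, hsub⟩ := runs_cons a u
    rw [hr, List.mem_cons] at hp
    rcases hp with rfl | hp
    · simp
    · exact ih (hsub p hp)

lemma isChain_runs (u : List (Fin n)) : (runs u).IsChain fun p q => q.1 ≠ p.1 + (p.2 : Fin n) := by
  induction u with
  | nil => exact List.isChain_nil
  | cons a u ih =>
    show (consRun a (runs u)).IsChain _
    rcases hu : runs u with _ | ⟨p, r⟩
    · exact List.isChain_singleton _
    rw [hu] at ih
    rw [consRun.eq_2]
    split_ifs with h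
    · refine List.isChain_cons.mpr ⟨fun q hq => ?_, ih.tail⟩
      have := List.isChain_cons.mp ih |>.1 q hq
      simp only [h] at this ⊢
      rwa [show a + ((p.2 + 1 : ℕ) : Fin n) = a + 1 + p.2 by push_cast; ring]
    · exact List.isChain_cons_cons.mpr ⟨by simpa [eq_comm] using h, ih⟩

lemma lt_of_mem_runs {u : List (Fin n)} (hu : RotWordFree u) {p : Fin n × ℕ}
    (hp : p ∈ runs u) : p.2 < n := by
  by_contra! h
  apply hu p.1
  have hpre : rotWord p.1 <+: ascRun p.1 p.2 := by
    rw [← Nat.add_sub_cancel' h, ascRun_add]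
    exact List.prefix_append _ _
  rw [← joinRuns_runs u]
  exact hpre.isInfix.trans (List.infix_of_mem_flatten (List.mem_map_of_mem hp))

lemma natCast_inj_of_lt {ℓ ℓ' : ℕ} (h : ℓ < n) (h' : ℓ' < n) (e : (ℓ : Fin n) = ℓ') : ℓ = ℓ' := by
  simpa [Fin.ext_iff, Fin.val_natCast, Nat.mod_eq_of_lt h, Nat.mod_eq_of_lt h'] using e

lemma add_natCast_ne_self (c : Fin n) {ℓ : ℕ} (h0 : 0 < ℓ) (h : ℓ < n) : c + (ℓ : Fin n) ≠ c := by
  intro e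
  have := natCast_inj_of_lt h (NeZero.pos n) (by simpa using e)
  omega

def toFreeGroup : FreeMonoid (Fin n) →* FreeGroup (Fin n) :=
  FreeMonoid.lift fun i => .of i * (.of (i + 1))⁻¹

lemma toFreeGroup_ascRun (c : Fin n) (ℓ : ℕ) :
    toFreeGroup (ofList (ascRun c ℓ)) = .of c * (.of (c + (ℓ : Fin n)))⁻¹ := by
  induction ℓ generalizing c with
  | zero => simp [ascRun]
  | succ ℓ ih =>
    rw [ascRun, ofList_cons, map_mul, ih, toFreeGroup, FreeMonoid.lift_eval_of,
      show c + 1 + (ℓ : Fin n) = c + ((ℓ + 1 : ℕ) : Fin n) by push_cast; ring]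
    group

lemma toFreeGroup_rotWord (c : Fin n) : toFreeGroup (ofList (rotWord c)) = 1 := by
  rw [rotWord, toFreeGroup_ascRun, Fin.natCast_self, add_zero, mul_inv_cancel]

def runToken (p : Fin n × ℕ) : List (Fin n × Bool) := [(p.1, true), (p.1 + p.2, false)]

lemma toFreeGroup_joinRuns (rs : List (Fin n × ℕ)) :
    toFreeGroup (ofList (joinRuns rs)) = FreeGroup.mk (rs.flatMap runToken) := by
  induction rs with
  | nil => rfl
  | cons p rs ih =>
    rw [joinRuns, List.map_cons, List.flatten_cons, ← joinRuns, ofList_append, map_mul, ih,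
      toFreeGroup_ascRun, List.flatMap_cons, ← FreeGroup.mul_mk, runToken,
      ← List.singleton_append, ← FreeGroup.mul_mk]
    rfl

lemma isReduced_flatMap_runToken {rs : List (Fin n × ℕ)} (hlen : ∀ p ∈ rs, 0 < p.2 ∧ p.2 < n)
    (hc : rs.IsChain fun p q => q.1 ≠ p.1 + (p.2 : Fin n)) :
    FreeGroup.IsReduced (rs.flatMap runToken) := by
  induction rs with
  | nil => exact FreeGroup.IsReduced.nil
  | cons p rs ih =>
    have hrs := ih (fun q hq => hlen q (List.mem_cons_of_mem _ hq)) hc.tail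
    obtain ⟨h0, h1⟩ := hlen p List.mem_cons_self
    rw [List.flatMap_cons, runToken, List.cons_append, List.cons_append, List.nil_append,
      FreeGroup.isReduced_cons_cons]
    refine ⟨fun e => absurd e.symm (add_natCast_ne_self p.1 h0 h1), ?_⟩
    rcases rs with _ | ⟨q, rs⟩
    · exact FreeGroup.IsReduced.singleton
    rw [List.flatMap_cons, runToken, List.cons_append, FreeGroup.isReduced_cons_cons]
    exact ⟨fun e => absurd e.symm (List.rel_of_isChain_cons_cons hc), hrs⟩

lemma eq_of_flatMap_runToken_eq : ∀ {rs rs' : List (Fin n × ℕ)}, (∀ p ∈ rs, p.2 < n) →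
    (∀ p ∈ rs', p.2 < n) → rs.flatMap runToken = rs'.flatMap runToken → rs = rs'
  | [], [], _, _, _ => rfl
  | [], _ :: _, _, _, e => by simp [runToken] at e
  | _ :: _, [], _, _, e => by simp [runToken] at e
  | p :: rs, p' :: rs', h, h', e => by
    simp only [List.flatMap_cons, runToken, List.cons_append, List.nil_append, List.cons.injEq,
      Prod.mk.injEq, and_true] at e
    obtain ⟨h1, h2, e⟩ := e
    rw [h1, add_right_inj] at h2
    have := natCast_inj_of_lt (h p List.mem_cons_self) (h' p' List.mem_cons_self) h2
    rw [Prod.ext h1 this, eq_of_flatMap_runToken_eq (fun q hq => h q (List.mem_cons_of_mem _ hq))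
      (fun q hq => h' q (List.mem_cons_of_mem _ hq)) e]

lemma eq_of_toFreeGroup_eq {u v : List (Fin n)} (hu : RotWordFree u) (hv : RotWordFree v)
    (h : toFreeGroup (ofList u) = toFreeGroup (ofList v)) : u = v := by
  have hred : ∀ {w : List (Fin n)}, RotWordFree w →
      FreeGroup.IsReduced ((runs w).flatMap runToken) := fun hw =>
    isReduced_flatMap_runToken (fun p hp => ⟨pos_of_mem_runs hp, lt_of_mem_runs hw hp⟩)
      (isChain_runs _)
  rw [← joinRuns_runs u, ← joinRuns_runs v, toFreeGroup_joinRuns, toFreeGroup_joinRuns] at h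
  have := congrArg FreeGroup.toWord h
  rw [FreeGroup.toWord_mk, FreeGroup.toWord_mk, (hred hu).reduce_eq, (hred hv).reduce_eq] at this
  rw [← joinRuns_runs u, ← joinRuns_runs v, eq_of_flatMap_runToken_eq
    (fun p hp => lt_of_mem_runs hu hp) (fun p hp => lt_of_mem_runs hv hp) this]

def toSeries : Scyc n →* (NCPowerSeries ℤ (Fin n))ˣ :=
  Con.lift _ (magnus.comp toFreeGroup) <| Con.conGen_le.mpr fun x y h => by
    obtain ⟨rfl, k, rfl⟩ := h
    rw [Con.ker_rel, MonoidHom.comp_apply, MonoidHom.comp_apply, ← pow_zero (finRotate n),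
      permWord_finRotate_pow, permWord_finRotate_pow, toFreeGroup_rotWord, toFreeGroup_rotWord]

lemma toSeries_mk (w : FreeMonoid (Fin n)) : toSeries (mk w) = magnus (toFreeGroup w) :=
  Con.lift_mk' _ _

lemma toSeries_zc : toSeries (zc n) = 1 := by
  rw [zc_eq_mk_rotWord 0, toSeries_mk, toFreeGroup_rotWord, map_one]

lemma eq_of_lengthHom_eq_of_toSeries_eq {x y : Scyc n} (h₁ : lengthHom x = lengthHom y)
    (h₂ : toSeries x = toSeries y) : x = y := by
  obtain ⟨m, u, hu, rfl⟩ := exists_eq_zc_pow_mul x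
  obtain ⟨m', v, hv, rfl⟩ := exists_eq_zc_pow_mul y
  simp only [map_mul, map_pow, toSeries_zc, one_pow, one_mul, toSeries_mk] at h₂
  obtain rfl := eq_of_toFreeGroup_eq hu hv (magnus_injective h₂)
  have hz : lengthHom (zc n) = Multiplicative.ofAdd n := by
    rw [zc_eq_mk_rotWord 0, lengthHom_mk]
    simp [FreeMonoid.lengthHom, rotWord, FreeMonoid.length]
  rw [map_mul, map_mul, map_pow, map_pow, hz, mul_left_inj, ← ofAdd_nsmul, ← ofAdd_nsmul,
    Multiplicative.ofAdd.injective.eq_iff, smul_eq_mul, smul_eq_mul,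
    Nat.mul_left_inj (NeZero.ne n)] at h₁
  rw [h₁]

def orderKey (x : Scyc n) : Multiplicative ℕ ×ₗ NCPowerSeries ℤ (Fin n) :=
  toLex (lengthHom x, (toSeries x : NCPowerSeries ℤ (Fin n)))

noncomputable instance : LinearOrder (Scyc n) :=
  LinearOrder.lift' orderKey fun x y h => by
    obtain ⟨h₁, h₂⟩ := Prod.ext_iff.mp (toLex.injective h)
    exact eq_of_lengthHom_eq_of_toSeries_eq h₁ (Units.ext h₂)

lemma lt_iff {x y : Scyc n} : x < y ↔ lengthHom x < lengthHom y ∨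
    lengthHom x = lengthHom y ∧ (toSeries x : NCPowerSeries ℤ (Fin n)) < toSeries y :=
  Prod.Lex.toLex_lt_toLex

lemma coeff_toSeries_nil (x : Scyc n) : (toSeries x : NCPowerSeries ℤ (Fin n)).coeff [] = 1 := by
  obtain ⟨w, rfl⟩ := mk_surjective x
  rw [toSeries_mk, coeff_nil_magnus]

instance : MulLeftStrictMono (Scyc n) where
  elim s _ _ h := by
    simp only [lt_iff, map_mul, Units.val_mul] at h ⊢
    exact h.imp (mul_lt_mul_right · _) fun h => ⟨by rw [h.1],
      mul_lt_mul_left_of_coeff_nil (coeff_toSeries_nil s) h.2⟩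

instance : MulRightStrictMono (Scyc n) where
  elim s _ _ h := by
    simp only [Function.swap, lt_iff, map_mul, Units.val_mul] at h ⊢
    exact h.imp (mul_lt_mul_left · _) fun h => ⟨by rw [h.1],
      mul_lt_mul_right_of_coeff_nil (coeff_toSeries_nil s) h.2⟩

end Scyc

/-- if `Q` is a (proper) prime ideal of the monoid `S_n`, then its `K`-linear
span `K[Q]` is a prime two-sided ideal of the monoid algebra `K[S_n]` (two-sidedness,
properness and elementwise primality). -/
theorem span_of_monoid_prime_is_prime (K : Type*) [Field K] (n : ℕ) (hn : 3 ≤ n)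
    (Q : Set (Scyc n))
    (hideal : ∀ q ∈ Q, ∀ s : Scyc n, s * q ∈ Q ∧ q * s ∈ Q)
    (hproper : Q ≠ Set.univ)
    (hprime : ∀ a b : Scyc n, a ∉ Q → b ∉ Q → ∃ s : Scyc n, a * s * b ∉ Q)
    (KQ : Submodule K (MonoidAlgebra K (Scyc n)))
    (hKQ : KQ = Submodule.span K (MonoidAlgebra.of K (Scyc n) '' Q)) :
    (∀ x ∈ KQ, ∀ r : MonoidAlgebra K (Scyc n), r * x ∈ KQ ∧ x * r ∈ KQ) ∧
    (KQ : Set (MonoidAlgebra K (Scyc n))) ≠ Set.univ ∧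
    (∀ a b : MonoidAlgebra K (Scyc n), (∀ r, a * r * b ∈ KQ) → a ∈ KQ ∨ b ∈ KQ) := by
  have : NeZero n := ⟨by omega⟩
  have hleft q hq s := (hideal q hq s).1
  have hright q hq s := (hideal q hq s).2
  rw [MonoidAlgebra.span_of_image_eq_supported] at hKQ
  subst hKQ
  refine ⟨fun x hx r => ⟨MonoidAlgebra.mul_mem_supported_left hleft hx r,
      MonoidAlgebra.mul_mem_supported_right hright hx r⟩, fun h => ?_,
    fun a b hab => MonoidAlgebra.mem_supported_or_mem_supported hleft hright hprime hab⟩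
  exact MonoidAlgebra.supported_ne_top hproper
    (SetLike.coe_injective (h.trans Submodule.top_coe.symm))
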